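/- arXiv:math/0102143 — 4 statements merged into one kernel-verified Lean document; each statement's English description precedes it below -/
import Mathlib

section
/- Let φ be a flow on a topological space M, let V ⊆ M, and let T > 0 be such that φ(t, V) ⊆ V for all t ≥ T. Then the set N = ⋂_{0 ≤ s ≤ T} φ(s, V) is positively invariant, i.e., φ(t, N) ⊆ N for all t ≥ 0. -/
open Set

/-- Let `φ` be a flow on a topological space `M`, let `V ⊆ M`, and let `T > 0` be such
that `φ(t, V) ⊆ V` for all `t ≥ T`.  Then the set `N = ⋂_{0 ≤ s ≤ T} φ(s, V)` is
positively invariant, i.e. `φ(t, N) ⊆ N` for all `t ≥ 0`. -/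
theorem inter_image_posInvariant
    {M : Type*} [TopologicalSpace M]
    (φ : ℝ → M → M)
    (hφ_cont : Continuous fun p : ℝ × M => φ p.1 p.2)
    (hφ_zero : ∀ x, φ 0 x = x)
    (hφ_add : ∀ t s x, φ t (φ s x) = φ (t + s) x)
    (V : Set M) (T : ℝ) (hT : 0 < T)
    (hV : ∀ t : ℝ, T ≤ t → φ t '' V ⊆ V)
    (N : Set M) (hN : N = ⋂ s ∈ Set.Icc (0 : ℝ) T, φ s '' V) :
    ∀ t : ℝ, 0 ≤ t → φ t '' N ⊆ N := by
  subst hN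
  rintro t ht y ⟨x, hx, rfl⟩
  simp only [mem_iInter, mem_Icc] at hx ⊢
  intro s hs
  obtain ⟨hs0, hsT⟩ := hs
  by_cases h : s ≤ t
  · by_cases h2 : T ≤ t - s
    · obtain ⟨v, hv, hxv⟩ := hx 0 ⟨le_refl 0, hT.le⟩
      rw [hφ_zero] at hxv
      subst hxv
      exact ⟨φ (t - s) v, hV (t - s) h2 ⟨v, hv, rfl⟩, by rw [hφ_add]; congr 1; ring⟩
    · obtain ⟨v, hv, hxv⟩ := hx (T - (t - s)) ⟨by linarith, by linarith⟩
      refine ⟨φ T v, hV T le_rfl ⟨v, hv, rfl⟩, ?_⟩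
      rw [← hxv, hφ_add, hφ_add]; congr 1; ring
  · obtain ⟨v, hv, hxv⟩ := hx (s - t) ⟨by linarith, by linarith⟩
    refine ⟨v, hv, ?_⟩
    rw [← hxv, hφ_add]; congr 1; ring
end

section
/- Let φ be a flow on a locally compact metric space M and let A be an attractor, i.e., a nonempty compact invariant set admitting a compact neighborhood V with ω(V) = A. Then there exists a compact positively invariant set N with A ⊆ int N such that A is the maximal invariant subset of N (every invariant set contained in N is contained in A). In particular, A is an isolated invariant set admitting an index pair of the form (N, ∅). -/
open Set

/-- The ω-limit set of a set `S` under the flow `φ`: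
`ω(S) = ⋂_{t ≥ 0} closure (φ([t,∞) × S))`. -/
def omegaLimitSet {M : Type*} [TopologicalSpace M] (φ : ℝ → M → M) (S : Set M) : Set M :=
  ⋂ t ∈ Set.Ici (0 : ℝ), closure (⋃ s ∈ Set.Ici t, φ s '' S)

/-- Let `φ` be a flow on a locally compact metric space `M` and let `A` be an attractor,
i.e. a nonempty compact invariant set admitting a compact neighborhood `V` with
`ω(V) = A`.  Then there exists a compact positively invariant set `N` with
`A ⊆ int N` such that `A` is the maximal invariant subset of `N` (every invariant set
contained in `N` is contained in `A`).  In particular, `A` is an isolated invariant set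
admitting an index pair of the form `(N, ∅)`. -/
theorem attractor_isolated_with_empty_exit_set
    {M : Type*} [MetricSpace M] [LocallyCompactSpace M]
    (φ : ℝ → M → M)
    (hφ_cont : Continuous fun p : ℝ × M => φ p.1 p.2)
    (hφ_zero : ∀ x, φ 0 x = x)
    (hφ_add : ∀ t s x, φ t (φ s x) = φ (t + s) x)
    (A V : Set M)
    (hA_ne : A.Nonempty) (hA_cpt : IsCompact A)
    (hA_inv : ∀ t : ℝ, φ t '' A ⊆ A)
    (hV_cpt : IsCompact V) (hAV : A ⊆ interior V)
    (hω : omegaLimitSet φ V = A) :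
    ∃ N : Set M, IsCompact N ∧ (∀ t : ℝ, 0 ≤ t → φ t '' N ⊆ N) ∧ A ⊆ interior N ∧
      (∀ S : Set M, (∀ t : ℝ, φ t '' S ⊆ S) → S ⊆ N → S ⊆ A) := by
  classical
  -- continuity of the time and space sections
  have hc1 : ∀ z : M, Continuous fun s : ℝ => φ s z := fun z =>
    hφ_cont.comp (continuous_id.prodMk continuous_const)
  have hc2 : ∀ t : ℝ, Continuous fun z : M => φ t z := fun t =>
    hφ_cont.comp (continuous_const.prodMk continuous_id)
  -- Key stability claim: a neighborhood of A whose forward orbit stays in V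
  have key : ∃ U : Set M, IsOpen U ∧ A ⊆ U ∧ ∀ t : ℝ, 0 ≤ t → ∀ x ∈ U, φ t x ∈ V := by
    by_contra hcon
    push_neg at hcon
    -- choose points near A that eventually leave V
    have hsel : ∀ n : ℕ, ∃ x ∈ Metric.thickening (1 / (n + 1)) A ∩ interior V,
        ∃ t : ℝ, 0 ≤ t ∧ φ t x ∉ V := by
      intro n
      have hUo : IsOpen (Metric.thickening (1 / (n + 1)) A ∩ interior V) :=
        Metric.isOpen_thickening.inter isOpen_interior
      have hAU : A ⊆ Metric.thickening (1 / (n + 1)) A ∩ interior V := by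
        refine subset_inter ?_ hAV
        exact Metric.self_subset_thickening (by positivity) A
      obtain ⟨t, ht0, x, hxU, hxV⟩ := hcon _ hUo hAU
      exact ⟨x, hxU, t, ht0, hxV⟩
    choose x hx t ht0 htV using hsel
    have hxA : ∀ n : ℕ, x n ∈ Metric.thickening (1 / (n + 1)) A := fun n => (hx n).1
    have hxV : ∀ n : ℕ, x n ∈ interior V := fun n => (hx n).2
    -- exit times
    set E : ℕ → Set ℝ := fun n => {s : ℝ | 0 ≤ s ∧ φ s (x n) ∈ (interior V)ᶜ} with hE
    have hEclosed : ∀ n, IsClosed (E n) := by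
      intro n
      have : E n = Ici (0 : ℝ) ∩ (fun s => φ s (x n)) ⁻¹' (interior V)ᶜ := by
        ext s; simp [hE, mem_Ici]
      rw [this]
      exact isClosed_Ici.inter (isOpen_interior.isClosed_compl.preimage (hc1 _))
    have hEne : ∀ n, (E n).Nonempty := fun n =>
      ⟨t n, ht0 n, fun h => htV n (interior_subset h)⟩
    have hEbdd : ∀ n, BddBelow (E n) := fun n => ⟨0, fun s hs => hs.1⟩
    set τ : ℕ → ℝ := fun n => sInf (E n) with hτ
    have hτmem : ∀ n, τ n ∈ E n := fun n => (hEclosed n).csInf_mem (hEne n) (hEbdd n)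
    have hτ0 : ∀ n, 0 ≤ τ n := fun n => (hτmem n).1
    have hτlt : ∀ n, ∀ s : ℝ, 0 ≤ s → s < τ n → φ s (x n) ∈ interior V := by
      intro n s hs0 hsτ
      by_contra h
      exact absurd (csInf_le (hEbdd n) ⟨hs0, h⟩) (not_le.mpr hsτ)
    -- exit times tend to infinity
    have hτbig : ∀ T : ℝ, 0 ≤ T → ∃ N₁ : ℕ, ∀ n ≥ N₁, T < τ n := by
      intro T hT
      -- tube lemma around [0,T] × A
      have hsub : Icc (0 : ℝ) T ×ˢ A ⊆ (fun p : ℝ × M => φ p.1 p.2) ⁻¹' interior V := by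
        rintro ⟨s, a⟩ ⟨hs, ha⟩
        exact hAV (hA_inv s ⟨a, ha, rfl⟩)
      obtain ⟨u, v, hu, hv, hIccu, hAv, huv⟩ :=
        generalized_tube_lemma isCompact_Icc hA_cpt (isOpen_interior.preimage hφ_cont) hsub
      obtain ⟨δ, hδ0, hδ⟩ := hA_cpt.exists_thickening_subset_open hv hAv
      obtain ⟨N₁, hN₁⟩ := exists_nat_gt (1 / δ)
      refine ⟨N₁, fun n hn => ?_⟩
      have hxv : x n ∈ v := by
        apply hδ
        refine Metric.thickening_mono ?_ A (hxA n)
        rw [div_le_iff₀ (by positivity)]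
        rw [div_lt_iff₀ hδ0] at hN₁
        have hle : (N₁ : ℝ) ≤ n + 1 := by exact_mod_cast Nat.le_succ_of_le hn
        nlinarith
      have horbit : ∀ s ∈ Icc (0 : ℝ) T, φ s (x n) ∈ interior V := by
        intro s hs
        exact huv (mk_mem_prod (hIccu hs) hxv)
      by_contra h
      push_neg at h
      exact (hτmem n).2 (horbit (τ n) ⟨hτ0 n, h⟩)
    -- the exit points lie in V (for n large enough that τ n > 0)
    obtain ⟨N₀, hN₀⟩ := hτbig 0 le_rfl
    have hyV : ∀ n : ℕ, φ (τ (n + N₀)) (x (n + N₀)) ∈ V := by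
      intro n
      have hτpos : 0 < τ (n + N₀) := hN₀ _ (Nat.le_add_left _ _)
      have htend : Filter.Tendsto (fun s => φ s (x (n + N₀))) (nhdsWithin (τ (n + N₀)) (Iio (τ (n + N₀))))
          (nhds (φ (τ (n + N₀)) (x (n + N₀)))) :=
        ((hc1 (x (n + N₀))).tendsto _).mono_left nhdsWithin_le_nhds
      refine hV_cpt.isClosed.mem_of_tendsto htend ?_
      filter_upwards [Ioo_mem_nhdsLT_of_mem (⟨hτpos, le_rfl⟩ : τ (n + N₀) ∈ Ioc 0 (τ (n + N₀)))]
        with s hs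
      exact interior_subset (hτlt _ s hs.1.le hs.2)
    -- extract a convergent subsequence of exit points
    obtain ⟨y, hyVmem, ψ, hψmono, hψtend⟩ := hV_cpt.tendsto_subseq hyV
    -- the limit lies in the ω-limit set of V
    have hyω : y ∈ omegaLimitSet φ V := by
      rw [omegaLimitSet]
      refine mem_iInter₂.mpr fun T hT => ?_
      obtain ⟨N₁, hN₁⟩ := hτbig T hT
      refine mem_closure_of_tendsto hψtend ?_
      filter_upwards [Filter.eventually_ge_atTop N₁] with k hk
      have hτk : T ≤ τ (ψ k + N₀) := by
        refine (hN₁ _ (le_trans (le_trans hk (hψmono.id_le k)) (Nat.le_add_right _ _))).le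
      exact mem_biUnion hτk ⟨x (ψ k + N₀), interior_subset (hxV _), rfl⟩
    -- but the limit is not in the interior of V: contradiction
    have hynot : y ∉ interior V := by
      have : y ∈ (interior V)ᶜ := by
        refine isOpen_interior.isClosed_compl.mem_of_tendsto hψtend ?_
        filter_upwards with k
        exact (hτmem (ψ k + N₀)).2
      exact this
    rw [hω] at hyω
    exact hynot (hAV hyω)
  obtain ⟨U, hUopen, hAU, hU⟩ := key
  -- define N as the set of points whose forward orbit stays in V
  refine ⟨⋂ t ∈ Ici (0 : ℝ), (fun z => φ t z) ⁻¹' V, ?_, ?_, ?_, ?_⟩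
  · -- compact
    refine IsCompact.of_isClosed_subset hV_cpt
      (isClosed_biInter fun t ht => hV_cpt.isClosed.preimage (hc2 t)) ?_
    intro z hz
    have := mem_iInter₂.mp hz 0 (mem_Ici.mpr le_rfl)
    simpa [hφ_zero] using this
  · -- positively invariant
    rintro t ht z ⟨w, hw, rfl⟩
    refine mem_iInter₂.mpr fun s hs => ?_
    have : φ s (φ t w) = φ (s + t) w := hφ_add s t w
    simp only [mem_preimage, this]
    exact mem_iInter₂.mp hw (s + t) (add_nonneg hs ht)
  · -- A ⊆ interior N
    have hUN : U ⊆ ⋂ t ∈ Ici (0 : ℝ), (fun z => φ t z) ⁻¹' V := by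
      intro z hz
      exact mem_iInter₂.mpr fun t ht => hU t ht z hz
    exact hAU.trans (interior_maximal hUN hUopen)
  · -- maximality
    intro S hSinv hSN z hz
    rw [← hω, omegaLimitSet]
    refine mem_iInter₂.mpr fun T hT => ?_
    have hzV : φ (-T) z ∈ V := by
      have hmem : φ (-T) z ∈ S := hSinv (-T) ⟨z, hz, rfl⟩
      have := mem_iInter₂.mp (hSN hmem) 0 (mem_Ici.mpr le_rfl)
      simpa [hφ_zero] using this
    refine subset_closure ?_
    refine mem_biUnion (le_refl T) ⟨φ (-T) z, hzV, ?_⟩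
    rw [hφ_add]
    simp [hφ_zero]
end

section
/- Let φ be a flow on a locally compact metric space M and let I be a nonempty isolated invariant set admitting an index pair of the form (N, ∅); equivalently, N is a compact positively invariant isolating neighborhood of I. Then ω(N) = I; in particular, I is an attractor. -/
open Set

/-- Let `φ` be a flow on a locally compact metric space `M` and let `I` be a nonempty
isolated invariant set admitting an index pair of the form `(N, ∅)`; equivalently,
`N` is a compact positively invariant isolating neighborhood of `I`.
Then `ω(N) = I`; in particular, `I` is an attractor. -/
theorem isolated_with_empty_exit_is_attractor
    {M : Type*} [MetricSpace M] [LocallyCompactSpace M]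
    (φ : ℝ → M → M)
    (hφ_cont : Continuous fun p : ℝ × M => φ p.1 p.2)
    (hφ_zero : ∀ x, φ 0 x = x)
    (hφ_add : ∀ t s x, φ t (φ s x) = φ (t + s) x)
    (I N : Set M)
    (hI_ne : I.Nonempty)
    (hI_inv : ∀ t : ℝ, φ t '' I ⊆ I)
    (hN_cpt : IsCompact N)
    (hN_posInv : ∀ t : ℝ, 0 ≤ t → φ t '' N ⊆ N)
    (hIN : I ⊆ interior N)
    (hI_max : ∀ S : Set M, (∀ t : ℝ, φ t '' S ⊆ S) → S ⊆ N → S ⊆ I) :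
    omegaLimitSet φ N = I ∧
      ∃ V : Set M, IsCompact V ∧ I ⊆ interior V ∧ omegaLimitSet φ V = I := by
  have hNclosed : IsClosed N := hN_cpt.isClosed
  have hIsubN : I ⊆ N := hIN.trans interior_subset
  -- ω(N) ⊆ N
  have hsub : ∀ r : ℝ, 0 ≤ r → closure (⋃ s ∈ Set.Ici r, φ s '' N) ⊆ N := by
    intro r hr
    refine closure_minimal ?_ hNclosed
    refine Set.iUnion₂_subset fun s hs => hN_posInv s (hr.trans hs)
  have homega_sub_N : omegaLimitSet φ N ⊆ N := by
    intro x hx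
    have := Set.mem_iInter₂.1 hx 0 (Set.mem_Ici.mpr le_rfl)
    exact hsub 0 le_rfl this
  -- ω(N) is invariant
  have hinv : ∀ t : ℝ, φ t '' (omegaLimitSet φ N) ⊆ omegaLimitSet φ N := by
    intro t
    rintro _ ⟨x, hx, rfl⟩
    rw [omegaLimitSet, Set.mem_iInter₂]
    intro r hr
    set r' : ℝ := max 0 (r - t) with hr'
    have hr'0 : (0:ℝ) ≤ r' := le_max_left _ _
    have hxr' : x ∈ closure (⋃ s ∈ Set.Ici r', φ s '' N) :=
      Set.mem_iInter₂.1 hx r' hr'0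
    have hcont : Continuous (φ t) :=
      hφ_cont.comp (continuous_const.prodMk continuous_id)
    have h1 : φ t x ∈ closure (φ t '' (⋃ s ∈ Set.Ici r', φ s '' N)) :=
      image_closure_subset_closure_image hcont ⟨x, hxr', rfl⟩
    refine closure_mono ?_ h1
    rintro _ ⟨y, hy, rfl⟩
    simp only [Set.mem_iUnion, Set.mem_image] at hy ⊢
    obtain ⟨s, hs, z, hz, rfl⟩ := hy
    refine ⟨t + s, Set.mem_Ici.mpr ?_, z, hz, (hφ_add t s z).symm⟩
    have : r - t ≤ s := (le_max_right 0 (r - t)).trans (Set.mem_Ici.1 hs)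
    linarith
  -- I ⊆ ω(N)
  have hI_sub : I ⊆ omegaLimitSet φ N := by
    intro x hx
    rw [omegaLimitSet, Set.mem_iInter₂]
    intro r hr
    refine subset_closure ?_
    simp only [Set.mem_iUnion, Set.mem_image]
    refine ⟨r, Set.mem_Ici.mpr le_rfl, φ (-r) x, ?_, ?_⟩
    · exact hIsubN (hI_inv (-r) ⟨x, hx, rfl⟩)
    · rw [hφ_add, add_neg_cancel, hφ_zero]
  have hmain : omegaLimitSet φ N = I :=
    le_antisymm (hI_max _ hinv homega_sub_N) hI_sub
  exact ⟨hmain, N, hN_cpt, hIN, hmain⟩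
end

section
/- Let φ be a flow on a locally compact metric space M and let (N, L) be a regular index pair for an isolated invariant set I, with exit time map τ₊ : N → [0,∞]. Then the map φ_♮ : N × [0,∞) → N defined by φ_♮(x,t) = φ(min{t, τ₊(x)}, x) is well defined (its values lie in N) and continuous. -/
open Set
open scoped Classical ENNReal

/-- The exit time map `τ₊ : N → [0,∞]` of an index pair `(N, L)` for the flow `φ`:
`τ₊(x) = sup { t ≥ 0 : φ([0,t] × {x}) ⊆ N ∖ L }` for `x ∈ N ∖ L`, and `τ₊(x) = 0`
for `x ∈ L`. -/
noncomputable def exitTime {M : Type*} [TopologicalSpace M]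
    (φ : ℝ → M → M) (N L : Set M) (x : M) : ℝ≥0∞ :=
  if x ∈ L then 0
  else sSup {τ : ℝ≥0∞ | ∃ t : ℝ, 0 ≤ t ∧ τ = ENNReal.ofReal t ∧
    ∀ s : ℝ, s ∈ Set.Icc 0 t → φ s x ∈ N \ L}

/-! Before the exit time the orbit stays in `N ∖ L`, so at the exit time it lies in
`closure (N ∖ L) ⊆ N`, as `N` is closed.  Continuity of `φ_♮` is that of `φ` composed with
the clipped time `(x, t) ↦ min t τ₊(x)`, which is continuous by regularity. -/

section ExitTime

variable {M : Type*} [TopologicalSpace M] {φ : ℝ → M → M} {N L : Set M} {x : M}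

theorem exitTime_of_mem (hx : x ∈ L) : exitTime φ N L x = 0 := by
  simp [exitTime, hx]

theorem flow_mem_diff_of_ofReal_lt_exitTime (hx : x ∉ L) {s : ℝ} (hs : 0 ≤ s)
    (hlt : ENNReal.ofReal s < exitTime φ N L x) : φ s x ∈ N \ L := by
  rw [exitTime, if_neg hx] at hlt
  obtain ⟨_, ⟨t, -, rfl, hstay⟩, hst⟩ := lt_sSup_iff.mp hlt
  exact hstay s ⟨hs, (ENNReal.ofReal_lt_ofReal_iff_of_nonneg hs).mp hst |>.le⟩

theorem flow_mem_closure_diff_of_ofReal_le_exitTime (hφx : Continuous fun s => φ s x)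
    (hx : x ∉ L) {s : ℝ} (hs : 0 < s) (hle : ENNReal.ofReal s ≤ exitTime φ N L x) :
    φ s x ∈ closure (N \ L) := by
  have hbefore : MapsTo (fun r => φ r x) (Ico 0 s) (N \ L) := fun r hr =>
    flow_mem_diff_of_ofReal_lt_exitTime hx hr.1
      (((ENNReal.ofReal_lt_ofReal_iff hs).mpr hr.2).trans_le hle)
  have hs_mem : s ∈ closure (Ico 0 s) := by
    rw [closure_Ico hs.ne]
    exact right_mem_Icc.mpr hs.le
  exact hbefore.closure hφx hs_mem

theorem flow_mem_of_ofReal_le_exitTime (hφx : Continuous fun s => φ s x)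
    (hφ_zero : φ 0 x = x) (hN : IsClosed N) (hxN : x ∈ N) {s : ℝ} (hs : 0 ≤ s)
    (hle : ENNReal.ofReal s ≤ exitTime φ N L x) : φ s x ∈ N := by
  rcases hs.eq_or_lt with rfl | hs
  · rwa [hφ_zero]
  have hxL : x ∉ L := fun hxL => by
    rw [exitTime_of_mem hxL, nonpos_iff_eq_zero, ENNReal.ofReal_eq_zero] at hle
    exact hle.not_gt hs
  exact closure_minimal sdiff_subset hN
    (flow_mem_closure_diff_of_ofReal_le_exitTime hφx hxL hs hle)

end ExitTime

theorem ContinuousOn.toReal_min_ofReal {X : Type*} [TopologicalSpace X] {f : X → ℝ}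
    {τ : X → ℝ≥0∞} {s : Set X} (hf : ContinuousOn f s) (hτ : ContinuousOn τ s) :
    ContinuousOn (fun x => (min (ENNReal.ofReal (f x)) (τ x)).toReal) s :=
  ENNReal.continuousOn_toReal.comp
    (continuous_min.comp_continuousOn (ENNReal.continuous_ofReal.comp_continuousOn hf |>.prodMk hτ))
    fun _ _ => ne_top_of_le_ne_top ENNReal.ofReal_ne_top (min_le_left _ _)

theorem induced_semiflow_continuous_general
    {M : Type*} [MetricSpace M]
    (φ : ℝ → M → M)
    (hφ_cont : Continuous fun p : ℝ × M => φ p.1 p.2)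
    (hφ_zero : ∀ x, φ 0 x = x)
    (N L : Set M)
    -- `(N, L)` is a pair of closed sets with `L ⊆ N`
    (hN_closed : IsClosed N)
    -- the index pair is regular: the exit time map is continuous on `N`
    (h_reg : ContinuousOn (exitTime φ N L) N) :
    (∀ x ∈ N, ∀ t : ℝ, 0 ≤ t →
        φ (min (ENNReal.ofReal t) (exitTime φ N L x)).toReal x ∈ N) ∧
    ContinuousOn
      (fun p : M × ℝ => φ (min (ENNReal.ofReal p.2) (exitTime φ N L p.1)).toReal p.1)
      (N ×ˢ Set.Ici (0 : ℝ)) := by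
  have hφx : ∀ x, Continuous fun s => φ s x := fun x =>
    hφ_cont.comp (continuous_id.prodMk continuous_const)
  refine ⟨fun x hxN t _ => ?_, ?_⟩
  · refine flow_mem_of_ofReal_le_exitTime (L := L) (hφx x) (hφ_zero x) hN_closed hxN
      ENNReal.toReal_nonneg ?_
    rw [ENNReal.ofReal_toReal (ne_top_of_le_ne_top ENNReal.ofReal_ne_top (min_le_left _ _))]
    exact min_le_right _ _
  · have htime := continuous_snd.continuousOn.toReal_min_ofReal
      (h_reg.comp continuousOn_fst fun (p : M × ℝ) (hp : p ∈ N ×ˢ Ici 0) => hp.1)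
    exact hφ_cont.comp_continuousOn (htime.prodMk continuousOn_fst)

/-- Let `φ` be a flow on a locally compact metric space `M` and let `(N, L)` be a
regular index pair for an isolated invariant set `I`, with exit time map
`τ₊ : N → [0,∞]`.  Then the map `φ_♮ : N × [0,∞) → N` defined by
`φ_♮(x,t) = φ(min{t, τ₊(x)}, x)` is well defined (its values lie in `N`) and
continuous. -/
theorem induced_semiflow_continuous
    {M : Type*} [MetricSpace M] [LocallyCompactSpace M]
    (φ : ℝ → M → M)
    (hφ_cont : Continuous fun p : ℝ × M => φ p.1 p.2)
    (hφ_zero : ∀ x, φ 0 x = x)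
    (hφ_add : ∀ t s x, φ t (φ s x) = φ (t + s) x)
    (I N L : Set M)
    -- `(N, L)` is a pair of closed sets with `L ⊆ N`
    (hN_closed : IsClosed N) (hL_closed : IsClosed L) (hLN : L ⊆ N)
    -- `I` is an invariant set and `closure (N ∖ L)` is an isolating neighborhood for `I`
    (hI_inv : ∀ t : ℝ, φ t '' I ⊆ I)
    (h_iso_cpt : IsCompact (closure (N \ L)))
    (h_iso_int : I ⊆ interior (closure (N \ L)))
    (h_iso_max : ∀ S : Set M, (∀ t : ℝ, φ t '' S ⊆ S) → S ⊆ closure (N \ L) → S ⊆ I)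
    -- `L` is positively invariant relative to `N`
    (h_posInv : ∀ x ∈ L, ∀ t : ℝ, 0 ≤ t →
      (∀ s ∈ Set.Icc 0 t, φ s x ∈ N) → ∀ s ∈ Set.Icc 0 t, φ s x ∈ L)
    -- `L` is the exit set of `N`
    (h_exit : ∀ x ∈ N, ∀ t : ℝ, 0 ≤ t → φ t x ∉ N → ∃ t' ∈ Set.Icc 0 t, φ t' x ∈ L)
    -- the index pair is regular: the exit time map is continuous on `N`
    (h_reg : ContinuousOn (exitTime φ N L) N) :
    (∀ x ∈ N, ∀ t : ℝ, 0 ≤ t →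
        φ (min (ENNReal.ofReal t) (exitTime φ N L x)).toReal x ∈ N) ∧
    ContinuousOn
      (fun p : M × ℝ => φ (min (ENNReal.ofReal p.2) (exitTime φ N L p.1)).toReal p.1)
      (N ×ˢ Set.Ici (0 : ℝ)) :=
  induced_semiflow_continuous_general φ hφ_cont hφ_zero N L hN_closed h_reg
end
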